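/- For every integer k ≥ 2, every real δ ∈ (0,1) and every real α ≥ 1 there exist a natural number n₀ = n₀(k,δ,α) and a real constant C = C(k,δ,α) > 0 with the following property. Let n ≥ n₀, let 1 ≤ t₁ < t₂ < … < t_k be real numbers such that for all indices 1 ≤ ℓ₁ ≤ ℓ₂ < ℓ₃ ≤ k one has t_{ℓ₃} ∉ [(1−δ)(t_{ℓ₁}+t_{ℓ₂}), t_{ℓ₁}+t_{ℓ₂}+2α], and let P ⊂ ℝ² be a separated set with |P| = n. Then the number of unordered pairs {p,q} of distinct points of P whose Euclidean distance lies in ⋃_{ℓ=1}^k [t_ℓ, t_ℓ+α] is at most n²/4 + C·n. -/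

import Mathlib

/-!
Join two points of `P` when their distance lies in one of the bands `[t_l, t_l + α]`, and call a
side of a triangle of this graph a top side if its band index is maximal. For a top side `uv` and
fixed bands `b ≤ c` of `uw` and `vw`, the gap condition makes the two annuli around `u` and `v`
meet at an angle bounded below (Heron's formula gives `|Im w| ≳ δ t_b` in coordinates where `u = 0`
and `v` is real), so the admissible `w` form two clusters of diameter `O_{δ,α}(1)` and, being
separated, number `O_{δ,α}(1)`. Hence each edge is a top side of `B = O_{k,δ,α}(1)` triangles.
On the other hand, a graph with `e` edges on `n` vertices has at least `e (4e - n²) / (3n)`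
triangles (codegrees and Cauchy–Schwarz), so `4e ≤ n² + 3Bn`.
-/

/-- The number of unordered pairs `{p, q}` of distinct points of the finite set `P ⊂ ℝ²`
whose Euclidean distance lies in the set `S ⊆ ℝ`. -/
noncomputable def nearPairs (P : Finset (EuclideanSpace ℝ (Fin 2))) (S : Set ℝ) : ℕ :=
  Set.ncard {e : Sym2 (EuclideanSpace ℝ (Fin 2)) |
    ¬ e.IsDiag ∧ (∀ p ∈ e, p ∈ P) ∧
      Sym2.lift ⟨fun p q => dist p q, fun _ _ => dist_comm _ _⟩ e ∈ S}

open Finset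

namespace SimpleGraph

variable {V : Type*} [Fintype V] (G : SimpleGraph V) [DecidableRel G.Adj]

def orderedTriangles : Finset (V × V × V) :=
  {x | G.Adj x.1 x.2.1 ∧ G.Adj x.2.1 x.2.2 ∧ G.Adj x.2.2 x.1}

@[simp]
lemma mem_orderedTriangles {x : V × V × V} :
    x ∈ G.orderedTriangles ↔ G.Adj x.1 x.2.1 ∧ G.Adj x.2.1 x.2.2 ∧ G.Adj x.2.2 x.1 := by
  simp [orderedTriangles]

lemma sum_sum_neighborFinset_degree_add_degree :
    ∑ u, ∑ v ∈ G.neighborFinset u, (G.degree u + G.degree v) = 2 * ∑ u, G.degree u ^ 2 := by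
  have hswap : ∑ u, ∑ v ∈ G.neighborFinset u, G.degree v =
      ∑ v, ∑ u ∈ G.neighborFinset v, G.degree v :=
    sum_comm' (by simp [adj_comm])
  simp only [sum_add_distrib, hswap, sum_const, card_neighborFinset_eq_degree, smul_eq_mul, sq]
  ring

variable [DecidableEq V]

lemma card_filter_orderedTriangles (p : V × V × V → Prop) [DecidablePred p] :
    #{x ∈ G.orderedTriangles | p x} =
      ∑ u, ∑ v ∈ G.neighborFinset u,
        #{w ∈ G.neighborFinset u ∩ G.neighborFinset v | p (u, v, w)} := by
  simp only [orderedTriangles, filter_filter, card_filter, Fintype.sum_prod_type,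
    neighborFinset_eq_filter, sum_filter, filter_inter]
  refine sum_congr rfl fun u _ => sum_congr rfl fun v _ => ?_
  split_ifs with huv
  · rw [univ_inter, sum_filter]
    refine sum_congr rfl fun w _ => ?_
    simp only [huv, true_and, G.adj_comm w u, ite_and, and_assoc]
  · exact sum_eq_zero fun w _ => if_neg fun h => huv h.1.1

lemma degree_add_degree_le_card_add_card_inter (u v : V) :
    G.degree u + G.degree v ≤ Fintype.card V + #(G.neighborFinset u ∩ G.neighborFinset v) := by
  rw [← card_neighborFinset_eq_degree, ← card_neighborFinset_eq_degree, ← card_union_add_card_inter]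
  exact Nat.add_le_add_right (card_le_univ _) _

theorem eight_mul_card_edgeFinset_sq_le :
    8 * #G.edgeFinset ^ 2 ≤
      Fintype.card V * (#G.orderedTriangles + 2 * Fintype.card V * #G.edgeFinset) := by
  set n := Fintype.card V
  have hT : #G.orderedTriangles =
      ∑ u, ∑ v ∈ G.neighborFinset u, #(G.neighborFinset u ∩ G.neighborFinset v) := by
    simpa using G.card_filter_orderedTriangles (fun _ => True)
  have hcodegree : 2 * ∑ u, G.degree u ^ 2 ≤ #G.orderedTriangles + 2 * n * #G.edgeFinset :=
    calc 2 * ∑ u, G.degree u ^ 2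
        = ∑ u, ∑ v ∈ G.neighborFinset u, (G.degree u + G.degree v) :=
          (G.sum_sum_neighborFinset_degree_add_degree).symm
      _ ≤ ∑ u, ∑ v ∈ G.neighborFinset u, (#(G.neighborFinset u ∩ G.neighborFinset v) + n) := by
          refine sum_le_sum fun u _ => sum_le_sum fun v _ => ?_
          rw [add_comm _ n]
          exact G.degree_add_degree_le_card_add_card_inter u v
      _ = #G.orderedTriangles + 2 * n * #G.edgeFinset := by
          simp only [sum_add_distrib, sum_const, card_neighborFinset_eq_degree, smul_eq_mul,
            ← sum_mul, sum_degrees_eq_twice_card_edges]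
          rw [← hT]
          ring
  have hCS : (2 * #G.edgeFinset) ^ 2 ≤ n * ∑ u, G.degree u ^ 2 := by
    simpa [sum_degrees_eq_twice_card_edges] using
      sq_sum_le_card_mul_sum_sq (s := univ) (f := fun u => G.degree u)
  nlinarith

theorem card_orderedTriangles_le (top : V → V → V → Prop) [∀ u v, DecidablePred (top u v)]
    (B : ℕ) (htop : ∀ u v w, G.Adj u v → G.Adj v w → G.Adj w u → top u v w ∨ top v w u ∨ top w u v)
    (hB : ∀ u v, G.Adj u v → #{w ∈ G.neighborFinset u ∩ G.neighborFinset v | top u v w} ≤ B) :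
    #G.orderedTriangles ≤ 6 * B * #G.edgeFinset := by
  set T := G.orderedTriangles
  let rot : V × V × V ≃ V × V × V :=
    ⟨fun x => (x.2.1, x.2.2, x.1), fun x => (x.2.2, x.1, x.2.1), fun _ => rfl, fun _ => rfl⟩
  have hrot (q : V × V × V → Prop) [DecidablePred q] : #{x ∈ T | q (rot x)} = #{x ∈ T | q x} :=
    card_equiv rot fun x => by
      simp only [mem_filter, T, mem_orderedTriangles, rot, Equiv.coe_fn_mk]
      tauto
  set A := {x ∈ T | top x.1 x.2.1 x.2.2}
  have hA : #A ≤ 2 * B * #G.edgeFinset :=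
    calc #A ≤ ∑ u, ∑ v ∈ G.neighborFinset u, B := by
          rw [card_filter_orderedTriangles]
          exact sum_le_sum fun u _ => sum_le_sum fun v hv =>
            hB u v ((G.mem_neighborFinset u v).1 hv)
      _ = 2 * B * #G.edgeFinset := by
          simp only [sum_const, card_neighborFinset_eq_degree, smul_eq_mul, ← sum_mul,
            sum_degrees_eq_twice_card_edges]
          ring
  have hA₂ : #{x ∈ T | top x.2.1 x.2.2 x.1} = #A := hrot fun x => top x.1 x.2.1 x.2.2
  have hA₃ : #{x ∈ T | top x.2.2 x.1 x.2.1} = #A := (hrot fun x => top x.2.1 x.2.2 x.1).trans hA₂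
  have hcover : T ⊆ A ∪ {x ∈ T | top x.2.1 x.2.2 x.1} ∪ {x ∈ T | top x.2.2 x.1 x.2.1} := by
    intro x hx
    obtain ⟨h₁, h₂, h₃⟩ := G.mem_orderedTriangles.1 hx
    simp only [A, mem_union, mem_filter, hx, true_and]
    have := htop _ _ _ h₁ h₂ h₃
    tauto
  calc #T ≤ #(A ∪ {x ∈ T | top x.2.1 x.2.2 x.1} ∪ {x ∈ T | top x.2.2 x.1 x.2.1}) :=
        card_le_card hcover
    _ ≤ #A + #{x ∈ T | top x.2.1 x.2.2 x.1} + #{x ∈ T | top x.2.2 x.1 x.2.1} :=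
        (card_union_le _ _).trans (Nat.add_le_add_right (card_union_le _ _) _)
    _ ≤ 6 * B * #G.edgeFinset := by rw [hA₂, hA₃]; linarith

theorem four_mul_card_edgeFinset_le (top : V → V → V → Prop) [∀ u v, DecidablePred (top u v)]
    (B : ℕ) (htop : ∀ u v w, G.Adj u v → G.Adj v w → G.Adj w u → top u v w ∨ top v w u ∨ top w u v)
    (hB : ∀ u v, G.Adj u v → #{w ∈ G.neighborFinset u ∩ G.neighborFinset v | top u v w} ≤ B) :
    4 * #G.edgeFinset ≤ Fintype.card V ^ 2 + 3 * B * Fintype.card V := by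
  have hlower := G.eight_mul_card_edgeFinset_sq_le
  have hupper := G.card_orderedTriangles_le top B htop hB
  rcases Nat.eq_zero_or_pos #G.edgeFinset with he | he
  · simp [he]
  · have : #G.edgeFinset * (8 * #G.edgeFinset) ≤
        #G.edgeFinset * (2 * (Fintype.card V ^ 2 + 3 * B * Fintype.card V)) := by
      calc _ = 8 * #G.edgeFinset ^ 2 := by ring
        _ ≤ _ := hlower
        _ ≤ Fintype.card V * (6 * B * #G.edgeFinset + 2 * Fintype.card V * #G.edgeFinset) := by
          gcongr
        _ = _ := by ring
    have := Nat.le_of_mul_le_mul_left this he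
    omega

end SimpleGraph

lemma card_Icc_floor_le {a b : ℝ} (h : a ≤ b) : (#(Finset.Icc ⌊a⌋ ⌊b⌋) : ℝ) ≤ b - a + 2 := by
  have hcard : (#(Finset.Icc ⌊a⌋ ⌊b⌋) : ℤ) = ⌊b⌋ + 1 - ⌊a⌋ :=
    Int.card_Icc_of_le _ _ ((Int.floor_le_floor h).trans (Int.le_add_one le_rfl))
  have : (#(Finset.Icc ⌊a⌋ ⌊b⌋) : ℝ) = ⌊b⌋ + 1 - ⌊a⌋ := by exact_mod_cast hcard
  linarith [Int.floor_le b, Int.sub_one_lt_floor a]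

theorem card_le_of_forall_dist_le {Q : Finset ℂ} (hQ : (Q : Set ℂ).Pairwise (1 ≤ dist · ·))
    {R : ℝ} (hR : ∀ w ∈ Q, ∀ w' ∈ Q, dist w w' ≤ R) : (#Q : ℝ) ≤ (4 * R + 2) ^ 2 := by
  obtain rfl | ⟨z, hz⟩ := Q.eq_empty_or_nonempty
  · simp only [Finset.card_empty, Nat.cast_zero]; positivity
  have hR0 : 0 ≤ R := dist_self z ▸ hR z hz z hz
  let I (x : ℝ) : Finset ℤ := Finset.Icc ⌊2 * x - 2 * R⌋ ⌊2 * x + 2 * R⌋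
  have hI (x : ℝ) : (#(I x) : ℝ) ≤ 4 * R + 2 := by
    have := card_Icc_floor_le (a := 2 * x - 2 * R) (b := 2 * x + 2 * R) (by linarith)
    linarith
  -- Squares of side `1 / 2` have diameter `< 1`, so each holds at most one point of `Q`.
  let cell (w : ℂ) : ℤ × ℤ := (⌊2 * w.re⌋, ⌊2 * w.im⌋)
  have hmaps : Set.MapsTo cell Q ↑(I z.re ×ˢ I z.im) := by
    intro w hw
    have hre := (Complex.abs_re_le_norm (w - z)).trans (Complex.dist_eq w z ▸ hR w hw z hz)
    have him := (Complex.abs_im_le_norm (w - z)).trans (Complex.dist_eq w z ▸ hR w hw z hz)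
    rw [Complex.sub_re, abs_le] at hre
    rw [Complex.sub_im, abs_le] at him
    simp only [coe_product, Set.mem_prod, mem_coe, Finset.mem_Icc, I, cell]
    refine ⟨⟨Int.floor_le_floor ?_, Int.floor_le_floor ?_⟩,
      Int.floor_le_floor ?_, Int.floor_le_floor ?_⟩ <;> linarith
  have hinj : Set.InjOn cell Q := by
    intro w hw w' hw' hcell
    by_contra hne
    have hre := Int.abs_sub_lt_one_of_floor_eq_floor (congrArg Prod.fst hcell)
    have him := Int.abs_sub_lt_one_of_floor_eq_floor (congrArg Prod.snd hcell)
    rw [← mul_sub, abs_mul, abs_two] at hre him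
    have hsep : 1 ≤ ‖w - w'‖ := Complex.dist_eq w w' ▸ hQ hw hw' hne
    have := hsep.trans (Complex.norm_le_abs_re_add_abs_im (w - w'))
    rw [Complex.sub_re, Complex.sub_im] at this
    linarith
  calc (#Q : ℝ) ≤ #(I z.re ×ˢ I z.im) := by
        exact_mod_cast card_le_card_of_injOn cell hmaps hinj
    _ = #(I z.re) * #(I z.im) := by rw [card_product, Nat.cast_mul]
    _ ≤ (4 * R + 2) * (4 * R + 2) := mul_le_mul (hI _) (hI _) (by positivity) (by positivity)
    _ = _ := by ring

theorem card_le_of_dist_le_of_im_mul_nonneg {Q : Finset ℂ}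
    (hQ : (Q : Set ℂ).Pairwise (1 ≤ dist · ·)) {R : ℝ}
    (hR : ∀ w ∈ Q, ∀ w' ∈ Q, 0 ≤ w.im * w'.im → dist w w' ≤ R) :
    (#Q : ℝ) ≤ 2 * (4 * R + 2) ^ 2 := by
  have hupper : (#{w ∈ Q | 0 ≤ w.im} : ℝ) ≤ (4 * R + 2) ^ 2 := by
    refine card_le_of_forall_dist_le (hQ.mono (filter_subset _ _)) fun w hw w' hw' => ?_
    rw [mem_filter] at hw hw'
    exact hR w hw.1 w' hw'.1 (mul_nonneg hw.2 hw'.2)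
  have hlower : (#{w ∈ Q | ¬ 0 ≤ w.im} : ℝ) ≤ (4 * R + 2) ^ 2 := by
    refine card_le_of_forall_dist_le (hQ.mono (filter_subset _ _)) fun w hw w' hw' => ?_
    rw [mem_filter, not_le] at hw hw'
    exact hR w hw.1 w' hw'.1 (mul_nonneg_of_nonpos_of_nonpos hw.2.le hw'.2.le)
  have := card_filter_add_card_filter_not (s := Q) (fun w => 0 ≤ w.im)
  have : (#Q : ℝ) = #{w ∈ Q | 0 ≤ w.im} + #{w ∈ Q | ¬ 0 ≤ w.im} := by exact_mod_cast this.symm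
  linarith

def lens (d s s' α : ℝ) : Set ℂ := {w | ‖w‖ ∈ Set.Icc s (s + α) ∧ ‖w - d‖ ∈ Set.Icc s' (s' + α)}

lemma two_mul_mul_re (w : ℂ) (d : ℝ) : 2 * d * w.re = ‖w‖ ^ 2 - ‖w - d‖ ^ 2 + d ^ 2 := by
  simp only [Complex.sq_norm, Complex.normSq_apply, Complex.sub_re, Complex.sub_im,
    Complex.ofReal_re, Complex.ofReal_im]
  ring

lemma norm_sq_eq_re_sq_add_im_sq (w : ℂ) : ‖w‖ ^ 2 = w.re ^ 2 + w.im ^ 2 := by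
  rw [Complex.sq_norm, Complex.normSq_apply]; ring

-- Heron's formula for the triangle with vertices `0`, `d` and `w`.
lemma four_mul_sq_mul_im_sq (w : ℂ) (d : ℝ) :
    4 * d ^ 2 * w.im ^ 2 = (d + ‖w‖ + ‖w - d‖) * (d + ‖w‖ - ‖w - d‖) * (d - ‖w‖ + ‖w - d‖) *
      (‖w‖ + ‖w - d‖ - d) := by
  linear_combination (-4 * d ^ 2) * norm_sq_eq_re_sq_add_im_sq w -
    (2 * d * w.re + ‖w‖ ^ 2 - ‖w - d‖ ^ 2 + d ^ 2) * two_mul_mul_re w d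

lemma abs_sq_sub_sq_le {a b s α : ℝ} (hs : 0 ≤ s) (ha : a ∈ Set.Icc s (s + α))
    (hb : b ∈ Set.Icc s (s + α)) :
    |a ^ 2 - b ^ 2| ≤ 2 * α * s + α ^ 2 := by
  obtain ⟨ha1, ha2⟩ := ha
  obtain ⟨hb1, hb2⟩ := hb
  rw [abs_le]; constructor <;> nlinarith

lemma abs_sub_mul_le_abs_sq_sub_sq {x y m : ℝ} (hxy : 0 ≤ x * y) (hx : m ≤ |x|)
    (hy : m ≤ |y|) : |x - y| * (2 * m) ≤ |x ^ 2 - y ^ 2| := by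
  have hsum : |x + y| = |x| + |y| := (abs_add_eq_add_abs_iff x y).2 (mul_nonneg_iff.1 hxy)
  rw [show x ^ 2 - y ^ 2 = (x - y) * (x + y) by ring, abs_mul, hsum]
  gcongr
  linarith

-- The first term bounds the diameter of the lens when `δ s ≤ 4α + 2`; otherwise the second bounds
-- the diameter of each of its halves `Im w ≥ 0` and `Im w ≤ 0`.
noncomputable def lensDiam (δ α : ℝ) : ℝ :=
  2 * ((4 * α + 2) / δ + α) + (2 * α + α ^ 2) * (1 + 5 * (3 + 2 * α) / δ)

section lens

variable {δ α s s' T d : ℝ}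

lemma sq_le_im_sq (hδ0 : 0 < δ) (hδ1 : δ < 1) (hα : 0 ≤ α) (hs : 4 * α + 2 < δ * s)
    (hss' : s ≤ s') (hs'T : s' ≤ T)
    (hgap : s' = T ∨ T ∉ Set.Icc ((1 - δ) * (s + s')) (s + s' + 2 * α))
    (hd : d ∈ Set.Icc T (T + α)) {w : ℂ} (hw : w ∈ lens d s s' α) :
    (δ * s / 10) ^ 2 ≤ w.im ^ 2 := by
  obtain ⟨⟨hr₁, hr₁'⟩, ⟨hr₂, hr₂'⟩⟩ := hw
  obtain ⟨hdT, hdT'⟩ := hd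
  set r₁ := ‖w‖
  set r₂ := ‖w - d‖
  have htri : d ≤ r₁ + r₂ := by
    have := norm_sub_le w (w - d)
    rwa [sub_sub_cancel, Complex.norm_real, Real.norm_of_nonneg (by nlinarith)] at this
  have hsδ : δ * s ≤ s := by nlinarith
  have hf₁ : s / 2 ≤ d + r₁ - r₂ := by linarith
  have hf₂ : s' / 2 ≤ d - r₁ + r₂ := by linarith
  have hf₃ : δ * s / 2 ≤ r₁ + r₂ - d ∧ d ≤ 3 * s' := by
    rcases hgap with rfl | hT
    · constructor <;> linarith
    · rw [Set.mem_Icc, not_and_or, not_le, not_le] at hT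
      rcases hT with hT | hT
      · constructor <;> nlinarith
      · linarith
  have hd0 : 0 < d := by linarith
  have hheron : d * (s / 2 * (s' / 2) * (δ * s / 2)) ≤ d * (4 * d * w.im ^ 2) := by
    calc d * (s / 2 * (s' / 2) * (δ * s / 2))
        = d * (s / 2) * (s' / 2) * (δ * s / 2) := by ring
      _ ≤ (d + r₁ + r₂) * (d + r₁ - r₂) * (d - r₁ + r₂) * (r₁ + r₂ - d) := by
          have hs0 : 0 ≤ s := by nlinarith
          refine mul_le_mul (mul_le_mul (mul_le_mul (by linarith) hf₁ (by linarith) (by linarith))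
            hf₂ (by linarith) (by nlinarith)) hf₃.1 (by positivity)
            (mul_nonneg (mul_nonneg (by linarith) (by linarith)) (by linarith))
      _ = d * (4 * d * w.im ^ 2) := by rw [← four_mul_sq_mul_im_sq]; ring
  have hs'0 : 0 < s' := by nlinarith
  have h1 : s' * (δ * s ^ 2) ≤ s' * (96 * w.im ^ 2) := by
    nlinarith [le_of_mul_le_mul_left hheron hd0, mul_le_mul_of_nonneg_right hf₃.2 (sq_nonneg w.im)]
  have h2 := le_of_mul_le_mul_left h1 hs'0
  nlinarith [mul_le_mul_of_nonneg_right hδ1.le (by positivity : 0 ≤ δ * s ^ 2)]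

lemma abs_re_sub_re_le (hα : 0 ≤ α) (hs : 0 ≤ s) (hss' : s ≤ s') (hs'd : s' ≤ d) (hd : 1 ≤ d)
    {w w' : ℂ} (hw : w ∈ lens d s s' α) (hw' : w' ∈ lens d s s' α) :
    |w.re - w'.re| ≤ 2 * α + α ^ 2 := by
  have h₁ := abs_sq_sub_sq_le hs hw.1 hw'.1
  have h₂ := abs_sq_sub_sq_le (hs.trans hss') hw.2 hw'.2
  have hre :
      2 * d * (w.re - w'.re) = (‖w‖ ^ 2 - ‖w'‖ ^ 2) - (‖w - d‖ ^ 2 - ‖w' - d‖ ^ 2) := by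
    rw [mul_sub, two_mul_mul_re, two_mul_mul_re]; ring
  have h : 2 * d * |w.re - w'.re| ≤ 2 * d * (2 * α + α ^ 2) := by
    have hd2 : 0 < 2 * d := by linarith
    rw [← abs_of_pos hd2, ← abs_mul, hre, abs_of_pos hd2]
    refine (abs_sub _ _).trans ?_
    nlinarith
  exact le_of_mul_le_mul_left h (by linarith)

lemma abs_im_sub_im_le (hδ0 : 0 < δ) (hδ1 : δ < 1) (hα : 0 ≤ α) (hs : 1 ≤ s)
    (hsδ : 4 * α + 2 < δ * s) (hss' : s ≤ s') (hs'T : s' ≤ T)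
    (hgap : s' = T ∨ T ∉ Set.Icc ((1 - δ) * (s + s')) (s + s' + 2 * α))
    (hd : d ∈ Set.Icc T (T + α)) {w w' : ℂ} (hw : w ∈ lens d s s' α) (hw' : w' ∈ lens d s s' α)
    (hsign : 0 ≤ w.im * w'.im) :
    |w.im - w'.im| ≤ 5 * ((2 * α + α ^ 2) * (3 + 2 * α)) / δ := by
  have hlow (v : ℂ) (hv : v ∈ lens d s s' α) : δ * s / 10 ≤ |v.im| := by
    have := sq_le_sq.1 (sq_le_im_sq hδ0 hδ1 hα hsδ hss' hs'T hgap hd hv)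
    rwa [abs_of_pos (by positivity)] at this
  have hre := abs_re_sub_re_le hα (by linarith) hss' (hs'T.trans hd.1) (by linarith [hd.1]) hw hw'
  have hre_le (v : ℂ) (hv : v ∈ lens d s s' α) : |v.re| ≤ s + α :=
    (Complex.abs_re_le_norm v).trans hv.1.2
  have him_sq : |w.im ^ 2 - w'.im ^ 2| ≤ s * ((2 * α + α ^ 2) * (3 + 2 * α)) := by
    have hsplit :
        w.im ^ 2 - w'.im ^ 2 = (‖w‖ ^ 2 - ‖w'‖ ^ 2) - (w.re - w'.re) * (w.re + w'.re) := by
      rw [norm_sq_eq_re_sq_add_im_sq, norm_sq_eq_re_sq_add_im_sq]; ring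
    have hnorm := abs_sq_sub_sq_le (by linarith) hw.1 hw'.1
    have hsum : |w.re + w'.re| ≤ 2 * (s + α) :=
      (abs_add_le _ _).trans (by linarith [hre_le w hw, hre_le w' hw'])
    rw [hsplit]
    refine (abs_sub _ _).trans ?_
    rw [abs_mul]
    have hs1 : 0 ≤ s - 1 := by linarith
    nlinarith [mul_le_mul hre hsum (abs_nonneg _) (by positivity), mul_nonneg hs1 (sq_nonneg α),
      mul_nonneg hs1 (by positivity : 0 ≤ α * (2 * α + α ^ 2))]
  have := (abs_sub_mul_le_abs_sq_sub_sq hsign (hlow w hw) (hlow w' hw')).trans him_sq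
  rw [le_div_iff₀ hδ0]
  nlinarith

theorem card_le_of_subset_lens (hδ0 : 0 < δ) (hδ1 : δ < 1) (hα : 0 ≤ α) (hs : 1 ≤ s)
    (hss' : s ≤ s') (hs'T : s' ≤ T)
    (hgap : s' = T ∨ T ∉ Set.Icc ((1 - δ) * (s + s')) (s + s' + 2 * α))
    (hd : d ∈ Set.Icc T (T + α)) {Q : Finset ℂ} (hQ : (Q : Set ℂ).Pairwise (1 ≤ dist · ·))
    (hQd : ∀ w ∈ Q, w ∈ lens d s s' α) :
    (#Q : ℝ) ≤ 2 * (4 * lensDiam δ α + 2) ^ 2 := by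
  have hsmall_le : 2 * ((4 * α + 2) / δ + α) ≤ lensDiam δ α := by
    have : 0 ≤ (2 * α + α ^ 2) * (1 + 5 * (3 + 2 * α) / δ) := by positivity
    unfold lensDiam; linarith
  have hlarge_le : (2 * α + α ^ 2) * (1 + 5 * (3 + 2 * α) / δ) ≤ lensDiam δ α := by
    have : 0 ≤ 2 * ((4 * α + 2) / δ + α) := by positivity
    unfold lensDiam; linarith
  refine card_le_of_dist_le_of_im_mul_nonneg hQ fun w hw w' hw' hsign => ?_
  replace hw := hQd w hw
  replace hw' := hQd w' hw'
  by_cases hsδ : δ * s ≤ 4 * α + 2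
  · have hs_le : s ≤ (4 * α + 2) / δ := by rw [le_div_iff₀ hδ0]; linarith
    calc dist w w' ≤ ‖w‖ + ‖w'‖ := by rw [Complex.dist_eq]; exact norm_sub_le w w'
      _ ≤ 2 * ((4 * α + 2) / δ + α) := by linarith [hw.1.2, hw'.1.2]
      _ ≤ lensDiam δ α := hsmall_le
  · rw [not_le] at hsδ
    calc dist w w' ≤ |w.re - w'.re| + |w.im - w'.im| := by
          rw [Complex.dist_eq, ← Complex.sub_re, ← Complex.sub_im]
          exact Complex.norm_le_abs_re_add_abs_im _
      _ ≤ (2 * α + α ^ 2) + 5 * ((2 * α + α ^ 2) * (3 + 2 * α)) / δ :=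
          add_le_add
            (abs_re_sub_re_le hα (by linarith) hss' (hs'T.trans hd.1) (by linarith [hd.1]) hw hw')
            (abs_im_sub_im_le hδ0 hδ1 hα hs hsδ hss' hs'T hgap hd hw hw' hsign)
      _ = (2 * α + α ^ 2) * (1 + 5 * (3 + 2 * α) / δ) := by ring
      _ ≤ lensDiam δ α := hlarge_le

end lens

lemma Isometry.exists_isometry_eq_zero_eq_dist {X : Type*} [MetricSpace X] {ι : X → ℂ}
    (hι : Isometry ι) {u v : X} (huv : u ≠ v) :
    ∃ ρ : X → ℂ, Isometry ρ ∧ ρ u = 0 ∧ ρ v = dist u v := by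
  set z := ι v - ι u
  have hz : ‖z‖ ≠ 0 := norm_ne_zero_iff.2 (sub_ne_zero.2 (hι.injective.ne huv.symm))
  have hnz : ‖z‖ = dist u v := by rw [← hι.dist_eq, dist_comm, Complex.dist_eq]
  refine ⟨fun x => starRingEnd ℂ z / ‖z‖ * (ι x - ι u), ?_, by simp, ?_⟩
  · refine Isometry.of_dist_eq fun x y => ?_
    rw [Complex.dist_eq, ← mul_sub, sub_sub_sub_cancel_right, norm_mul, norm_div,
      Complex.norm_conj, Complex.norm_real, Real.norm_of_nonneg (norm_nonneg _), div_self hz,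
      one_mul, ← Complex.dist_eq, hι.dist_eq]
  · change starRingEnd ℂ z / ‖z‖ * z = dist u v
    rw [div_mul_eq_mul_div, Complex.conj_mul', sq, mul_div_assoc,
      div_self (Complex.ofReal_ne_zero.2 hz), mul_one, hnz]

theorem card_le_of_forall_dist_mem_Icc {X : Type*} [MetricSpace X] {ι : X → ℂ} (hι : Isometry ι)
    {δ α s s' T : ℝ} (hδ0 : 0 < δ) (hδ1 : δ < 1) (hα : 0 ≤ α) (hs : 1 ≤ s) (hss' : s ≤ s')
    (hs'T : s' ≤ T) (hgap : s' = T ∨ T ∉ Set.Icc ((1 - δ) * (s + s')) (s + s' + 2 * α)) {u v : X}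
    (huv : dist u v ∈ Set.Icc T (T + α)) {Q : Finset X} (hQ : (Q : Set X).Pairwise (1 ≤ dist · ·))
    (hQuv : ∀ w ∈ Q, dist u w ∈ Set.Icc s (s + α) ∧ dist v w ∈ Set.Icc s' (s' + α)) :
    (#Q : ℝ) ≤ 2 * (4 * lensDiam δ α + 2) ^ 2 := by
  have hne : u ≠ v := dist_pos.1 (by linarith [huv.1])
  obtain ⟨ρ, hρ, hρu, hρv⟩ := hι.exists_isometry_eq_zero_eq_dist hne
  classical
  rw [← card_image_of_injective Q hρ.injective]
  refine card_le_of_subset_lens hδ0 hδ1 hα hs hss' hs'T hgap huv ?_ ?_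
  · rw [coe_image, hρ.injective.injOn.pairwise_image]
    exact fun p hp q hq hpq => (hρ.dist_eq p q).ge.trans' (hQ hp hq hpq)
  · simp only [mem_image, forall_exists_index, and_imp, forall_apply_eq_imp_iff₂]
    intro w hw
    rw [lens, Set.mem_ofPred_eq, ← hρv, ← dist_zero_right, ← Complex.dist_eq, ← hρu,
      hρ.dist_eq, hρ.dist_eq, dist_comm w, dist_comm w]
    exact hQuv w hw

def IsTopSide {X ι : Type*} [PseudoMetricSpace X] [LE ι] (I : ι → Set ℝ) (u v w : X) : Prop :=
  ∃ a b c, b ≤ a ∧ c ≤ a ∧ dist u v ∈ I a ∧ dist u w ∈ I b ∧ dist v w ∈ I c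

lemma isTopSide_or {X ι : Type*} [PseudoMetricSpace X] [LinearOrder ι] (I : ι → Set ℝ) {u v w : X}
    (huv : dist u v ∈ ⋃ l, I l) (hvw : dist v w ∈ ⋃ l, I l) (hwu : dist w u ∈ ⋃ l, I l) :
    IsTopSide I u v w ∨ IsTopSide I v w u ∨ IsTopSide I w u v := by
  obtain ⟨a, ha⟩ := Set.mem_iUnion.1 huv
  obtain ⟨b, hb⟩ := Set.mem_iUnion.1 hvw
  obtain ⟨c, hc⟩ := Set.mem_iUnion.1 hwu
  rw [dist_comm] at hc
  by_cases h₁ : b ≤ a ∧ c ≤ a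
  · exact Or.inl ⟨a, c, b, h₁.2, h₁.1, ha, hc, hb⟩
  rw [dist_comm] at ha hc
  by_cases h₂ : a ≤ b ∧ c ≤ b
  · exact Or.inr (Or.inl ⟨b, a, c, h₂.1, h₂.2, hb, ha, hc⟩)
  rw [dist_comm] at hb ha
  refine Or.inr (Or.inr ⟨c, b, a, ?_, ?_, hc, hb, ha⟩) <;>
  · rw [not_and_or, not_le, not_le] at h₁ h₂
    rcases le_total a b with h | h <;> grind

theorem card_le_of_forall_dist_mem_bands {X : Type*} [MetricSpace X] {ι : X → ℂ}
    (hι : Isometry ι) {k : ℕ} {δ α : ℝ} {t : Fin k → ℝ} (hδ0 : 0 < δ) (hδ1 : δ < 1) (hα : 0 ≤ α)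
    (ht1 : ∀ l, 1 ≤ t l) (ht : Monotone t)
    (hgap : ∀ l₁ l₂ l₃ : Fin k, l₁ ≤ l₂ → l₂ < l₃ →
      t l₃ ∉ Set.Icc ((1 - δ) * (t l₁ + t l₂)) (t l₁ + t l₂ + 2 * α))
    {a b c : Fin k} (hba : b ≤ a) (hca : c ≤ a) {u v : X} (huv : dist u v ∈ Set.Icc (t a) (t a + α))
    {Q : Finset X} (hQ : (Q : Set X).Pairwise (1 ≤ dist · ·))
    (hQuv : ∀ w ∈ Q, dist u w ∈ Set.Icc (t b) (t b + α) ∧ dist v w ∈ Set.Icc (t c) (t c + α)) :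
    (#Q : ℝ) ≤ 2 * (4 * lensDiam δ α + 2) ^ 2 := by
  have hgap' {b c : Fin k} (hbc : b ≤ c) (hca : c ≤ a) :
      t c = t a ∨ t a ∉ Set.Icc ((1 - δ) * (t b + t c)) (t b + t c + 2 * α) := by
    rcases hca.eq_or_lt with rfl | hlt
    · exact Or.inl rfl
    · exact Or.inr (hgap b c a hbc hlt)
  rcases le_total b c with hbc | hcb
  · exact card_le_of_forall_dist_mem_Icc hι hδ0 hδ1 hα (ht1 b) (ht hbc) (ht hca) (hgap' hbc hca)
      huv hQ hQuv
  · exact card_le_of_forall_dist_mem_Icc hι hδ0 hδ1 hα (ht1 c) (ht hcb) (ht hba) (hgap' hcb hba)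
      (dist_comm u v ▸ huv) hQ fun w hw => (hQuv w hw).symm

theorem card_filter_isTopSide_le {X : Type*} [MetricSpace X] {ι : X → ℂ} (hι : Isometry ι)
    {k : ℕ} {δ α : ℝ} {t : Fin k → ℝ} (hδ0 : 0 < δ) (hδ1 : δ < 1) (hα : 0 ≤ α)
    (ht1 : ∀ l, 1 ≤ t l) (ht : Monotone t)
    (hgap : ∀ l₁ l₂ l₃ : Fin k, l₁ ≤ l₂ → l₂ < l₃ →
      t l₃ ∉ Set.Icc ((1 - δ) * (t l₁ + t l₂)) (t l₁ + t l₂ + 2 * α))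
    {Q : Finset X} (hQ : (Q : Set X).Pairwise (1 ≤ dist · ·)) (u v : X)
    [DecidablePred (IsTopSide (fun l => Set.Icc (t l) (t l + α)) u v)] :
    #{w ∈ Q | IsTopSide (fun l => Set.Icc (t l) (t l + α)) u v w} ≤
      k ^ 3 * ⌈2 * (4 * lensDiam δ α + 2) ^ 2⌉₊ := by
  classical
  let I (l : Fin k) : Set ℝ := Set.Icc (t l) (t l + α)
  let piece (x : Fin k × Fin k × Fin k) : Finset X :=
    {w ∈ Q | x.2.1 ≤ x.1 ∧ x.2.2 ≤ x.1 ∧ dist u v ∈ I x.1 ∧ dist u w ∈ I x.2.1 ∧ dist v w ∈ I x.2.2}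
  have hpiece (x : Fin k × Fin k × Fin k) : #(piece x) ≤ ⌈2 * (4 * lensDiam δ α + 2) ^ 2⌉₊ := by
    obtain ⟨a, b, c⟩ := x
    by_cases h : b ≤ a ∧ c ≤ a ∧ dist u v ∈ I a
    · have := card_le_of_forall_dist_mem_bands hι hδ0 hδ1 hα ht1 ht hgap h.1 h.2.1 h.2.2
        (hQ.mono (filter_subset _ _)) fun w (hw : w ∈ piece (a, b, c)) => (mem_filter.1 hw).2.2.2.2
      exact_mod_cast this.trans (Nat.le_ceil _)
    · rw [card_eq_zero.2 (filter_eq_empty_iff.2 fun w _ hw => h ⟨hw.1, hw.2.1, hw.2.2.1⟩)]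
      exact Nat.zero_le _
  calc _ ≤ #(univ.biUnion piece) := card_le_card fun w hw => by
        obtain ⟨hwQ, a, b, c, h⟩ := mem_filter.1 hw
        exact mem_biUnion.2 ⟨(a, b, c), mem_univ _, mem_filter.2 ⟨hwQ, h⟩⟩
    _ ≤ ∑ x, #(piece x) := card_biUnion_le
    _ ≤ ∑ _x : Fin k × Fin k × Fin k, ⌈2 * (4 * lensDiam δ α + 2) ^ 2⌉₊ :=
        sum_le_sum fun x _ => hpiece x
    _ = k ^ 3 * ⌈2 * (4 * lensDiam δ α + 2) ^ 2⌉₊ := by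
        simp only [sum_const, card_univ, Fintype.card_prod, Fintype.card_fin, smul_eq_mul]; ring

def distGraph (X : Type*) [PseudoMetricSpace X] (S : Set ℝ) : SimpleGraph X where
  Adj p q := p ≠ q ∧ dist p q ∈ S
  symm := ⟨fun p q h => ⟨h.1.symm, dist_comm p q ▸ h.2⟩⟩
  loopless := ⟨fun _ h => h.1 rfl⟩

lemma nearPairs_eq_ncard_edgeSet (P : Finset (EuclideanSpace ℝ (Fin 2))) (S : Set ℝ) :
    nearPairs P S = (distGraph P S).edgeSet.ncard := by
  rw [nearPairs, ← Set.ncard_image_of_injective _ (Sym2.map.injective Subtype.val_injective)]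
  congr 1
  ext e
  induction e using Sym2.ind with
  | _ p q =>
    simp only [Set.mem_ofPred_eq, Sym2.mk_isDiag_iff, Sym2.mem_iff, forall_eq_or_imp, forall_eq,
      Sym2.lift_mk, Set.mem_image]
    constructor
    · rintro ⟨hne, ⟨hp, hq⟩, hS⟩
      exact ⟨s(⟨p, hp⟩, ⟨q, hq⟩), ⟨fun h => hne (congrArg Subtype.val h), hS⟩, rfl⟩
    · rintro ⟨e, he, hpq⟩
      induction e using Sym2.ind with
      | _ a b =>
        obtain ⟨hne, hS⟩ := he
        rw [Sym2.map_mk, Sym2.eq_iff] at hpq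
        rcases hpq with ⟨rfl, rfl⟩ | ⟨rfl, rfl⟩
        · exact ⟨fun h => hne (Subtype.ext h), ⟨a.2, b.2⟩, hS⟩
        · exact ⟨fun h => hne (Subtype.ext h.symm), ⟨b.2, a.2⟩,
            dist_comm (a : EuclideanSpace ℝ (Fin 2)) b ▸ hS⟩

theorem nearly_equal_distances_plane_alpha (k : ℕ) (hk : 2 ≤ k)
    (δ : ℝ) (hδ : δ ∈ Set.Ioo (0:ℝ) 1) (α : ℝ) (hα : 1 ≤ α) :
    ∃ (n₀ : ℕ) (C : ℝ), 0 < C ∧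
      ∀ (n : ℕ), n₀ ≤ n →
      ∀ (t : Fin k → ℝ), 1 ≤ t ⟨0, by omega⟩ → StrictMono t →
      (∀ l₁ l₂ l₃ : Fin k, l₁ ≤ l₂ → l₂ < l₃ →
        t l₃ ∉ Set.Icc ((1 - δ) * (t l₁ + t l₂)) (t l₁ + t l₂ + 2 * α)) →
      ∀ (P : Finset (EuclideanSpace ℝ (Fin 2))), P.card = n →
        (∀ p ∈ P, ∀ q ∈ P, p ≠ q → 1 ≤ dist p q) →
        (nearPairs P (⋃ l : Fin k, Set.Icc (t l) (t l + α)) : ℝ) ≤ (n : ℝ)^2 / 4 + C * n := by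
  classical
  obtain ⟨hδ0, hδ1⟩ := hδ
  set B := k ^ 3 * ⌈2 * (4 * lensDiam δ α + 2) ^ 2⌉₊
  refine ⟨0, 3 * B / 4 + 1, by positivity, fun n _ t ht0 ht hgap P hP hsep => ?_⟩
  let I (l : Fin k) : Set ℝ := Set.Icc (t l) (t l + α)
  let G := distGraph P (⋃ l, I l)
  have ht1 (l : Fin k) : 1 ≤ t l := ht0.trans (ht.monotone (Nat.zero_le l.val))
  have hι : Isometry fun p : P => Complex.orthonormalBasisOneI.repr.symm p :=
    Complex.orthonormalBasisOneI.repr.symm.isometry.comp isometry_subtype_coe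
  have hedges := G.four_mul_card_edgeFinset_le (IsTopSide I) B
    (fun u v w huv hvw hwu => isTopSide_or I huv.2 hvw.2 hwu.2)
    fun u v _ => (card_le_card (filter_subset_filter _ (subset_univ _))).trans
      (card_filter_isTopSide_le hι hδ0 hδ1 (by linarith) ht1 ht.monotone hgap
        (fun p _ q _ hpq => hsep p p.2 q q.2 (Subtype.coe_ne_coe.2 hpq)) u v)
  rw [Fintype.card_coe, hP] at hedges
  have hG : nearPairs P (⋃ l, I l) = #G.edgeFinset := by
    rw [nearPairs_eq_ncard_edgeSet, ← SimpleGraph.coe_edgeFinset, Set.ncard_coe_finset]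
  rw [hG]
  have : (4 * #G.edgeFinset : ℝ) ≤ n ^ 2 + 3 * B * n := by exact_mod_cast hedges
  nlinarith
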